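/- Let G be a connected finite simple graph with at least five vertices. Then G does not contain the banner as a topological minor if and only if G is a cycle or G does not contain the cycle C_4 as a topological minor. -/

import Mathlib

open SimpleGraph

/-- The internal vertices of a walk: its support minus the two endpoints. -/
def SimpleGraph.Walk.internalSupport {V : Type*} {G : SimpleGraph V} {u v : V}
    (p : G.Walk u v) : List V :=
  p.support.tail.dropLast

/-- `G` contains `H` as a topological minor: there is an injective map `φ` on vertices and,
for each edge `{x,y}` of `H`, a path in `G` from `φ x` to `φ y` (one path per edge, encoded
symmetrically on ordered adjacent pairs), such that for any two distinct edges of `H` no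
internal vertex of the path of one edge lies on the path of the other edge. -/
def SimpleGraph.IsTopMinor {V W : Type*} (H : SimpleGraph V) (G : SimpleGraph W) : Prop :=
  ∃ (φ : V → W) (σ : ∀ ⦃x y : V⦄, H.Adj x y → G.Walk (φ x) (φ y)),
    Function.Injective φ ∧
    (∀ ⦃x y⦄ (h : H.Adj x y), (σ h).IsPath) ∧
    (∀ ⦃x y⦄ (h : H.Adj x y), σ h.symm = (σ h).reverse) ∧
    (∀ ⦃x y x' y'⦄ (h : H.Adj x y) (h' : H.Adj x' y'),
      s(x, y) ≠ s(x', y') →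
      ∀ w ∈ (σ h).internalSupport, w ∉ (σ h').support)

/-- The banner: a cycle `0 - 1 - 2 - 3 - 0` together with a pendant vertex `4`
adjacent to `0`. -/
def bannerGraph : SimpleGraph (Fin 5) :=
  SimpleGraph.fromRel (fun i j =>
    (i = 0 ∧ j = 1) ∨ (i = 1 ∧ j = 2) ∨ (i = 2 ∧ j = 3) ∨ (i = 3 ∧ j = 0) ∨ (i = 0 ∧ j = 4))

/-- A graph is a cycle if it is connected and `2`-regular. -/
def SimpleGraph.IsCycleGraph {V : Type*} (G : SimpleGraph V) : Prop :=
  G.Connected ∧ ∀ v, Nat.card (G.neighborSet v) = 2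

/-!
A banner model contains a `C₄` model, and the branch vertex of degree three of a banner forces
three distinct neighbours of its image, which a `2`-regular graph does not have.

Conversely, a `C₄` model yields a cycle `C` of length at least four. If some vertex lies off `C`,
connectivity gives an edge from `C` to a vertex outside it, and `C` with that pendant edge is a
banner. Otherwise `C` is Hamiltonian, and since `G` is not `2`-regular, `C` has a chord `vw`. The
chord splits `C` into two `v`–`w` paths whose lengths sum to at least five; the longer one closed
up by the chord is a cycle of length at least four, and the neighbour of `v` on the other path is
a pendant vertex off it.
-/

namespace SimpleGraph.Walk

variable {V : Type*} {G : SimpleGraph V} {u v x : V}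

lemma support_eq_cons_internalSupport_append (p : G.Walk u v) (hp : ¬p.Nil) :
    p.support = u :: (p.internalSupport ++ [v]) := by
  rw [internalSupport, ← support_tail_of_not_nil p hp, dropLast_support_concat,
    cons_support_tail hp]

lemma IsPath.mem_internalSupport_iff {p : G.Walk u v} (hp : p.IsPath) :
    x ∈ p.internalSupport ↔ x ∈ p.support ∧ x ≠ u ∧ x ≠ v := by
  by_cases hnil : p.Nil
  · simp +contextual [internalSupport, nil_iff_support_eq.mp hnil]
  · have hnd := hp.support_nodup
    rw [support_eq_cons_internalSupport_append p hnil] at hnd ⊢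
    grind

@[simp]
lemma _root_.SimpleGraph.Adj.internalSupport_toWalk (h : G.Adj u v) :
    h.toWalk.internalSupport = [] :=
  rfl

lemma IsPath.disjoint_tail_support {a b c d : V} {p : G.Walk a b} {q : G.Walk c d}
    (hp : p.IsPath) (hq : q.IsPath) (hpq : ∀ x ∈ p.internalSupport, x ∉ q.support)
    (hqp : ∀ x ∈ q.internalSupport, x ∉ p.support) (hbd : b ≠ d) :
    p.support.tail.Disjoint q.support.tail := by
  have hpt := hp.support_nodup
  have hqt := hq.support_nodup
  rw [← cons_tail_support] at hpt hqt
  intro x hxp hxq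
  by_cases hxb : x = b
  · subst hxb
    refine hqp x (hq.mem_internalSupport_iff.mpr ⟨List.mem_of_mem_tail hxq, ?_, hbd⟩)
      (List.mem_of_mem_tail hxp)
    rintro rfl
    exact (List.nodup_cons.mp hqt).1 hxq
  · refine hpq x (hp.mem_internalSupport_iff.mpr ⟨List.mem_of_mem_tail hxp, ?_, hxb⟩)
      (List.mem_of_mem_tail hxq)
    rintro rfl
    exact (List.nodup_cons.mp hpt).1 hxp

lemma isCycle_of_nodup_tail_support {c : G.Walk u u} (h : c.support.tail.Nodup)
    (hc : 3 ≤ c.length) : c.IsCycle :=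
  isCycle_iff_isPath_tail_and_le_length.mpr
    ⟨.mk' (by rwa [support_tail_of_not_nil _ (not_nil_iff_lt_length.mpr (by omega))]), hc⟩

lemma IsCycle.exists_adj_notMem_edges {c : G.Walk u u} (hc : c.IsCycle) (hv : v ∈ c.support)
    (hdeg : Nat.card (G.neighborSet v) ≠ 2) : ∃ w, G.Adj v w ∧ s(v, w) ∉ c.edges := by
  by_contra! h
  refine hdeg ?_
  have : G.neighborSet v = c.toSubgraph.neighborSet v :=
    Set.ext fun w => ⟨fun hw => adj_toSubgraph_iff_mem_edges.mpr (h w hw),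
      fun hw => c.toSubgraph.adj_sub hw⟩
  rw [Nat.card_coe_set_eq, this, hc.ncard_neighborSet_toSubgraph_eq_two hv]

lemma IsCycle.isHamiltonianCycle_of_forall_mem_support [DecidableEq V] {c : G.Walk u u}
    (hc : c.IsCycle) (h : ∀ x, x ∈ c.support) : c.IsHamiltonianCycle := by
  refine isHamiltonianCycle_iff_isCycle_and_support_count_tail_eq_one.mpr
    ⟨hc, fun x => List.count_eq_one_of_mem hc.support_nodup ?_⟩
  rcases c.mem_support_iff.mp (h x) with rfl | hx
  · exact c.end_mem_tail_support hc.not_nil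
  · exact hx

end SimpleGraph.Walk

namespace SimpleGraph

open Walk

variable {V W X : Type*} {H : SimpleGraph V} {G : SimpleGraph W}

lemma IsTopMinor.of_isContained {H' : SimpleGraph X} (hH : H' ⊑ H) (h : H.IsTopMinor G) :
    H'.IsTopMinor G := by
  obtain ⟨f⟩ := hH
  obtain ⟨φ, σ, hinj, hpath, hsymm, hdisj⟩ := h
  refine ⟨φ ∘ f, fun _ _ hxy => σ (f.toHom.map_adj hxy), hinj.comp f.injective,
    fun _ _ _ => hpath _, fun _ _ _ => hsymm _, fun _ _ _ _ _ _ hne => hdisj _ _ ?_⟩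
  exact fun heq => hne (Sym2.map.injective f.injective (by simpa using heq))

lemma IsTopMinor.exists_card_neighborSet_le [Finite W] (h : H.IsTopMinor G) :
    ∃ φ : V → W, ∀ x, Nat.card (H.neighborSet x) ≤ Nat.card (G.neighborSet (φ x)) := by
  obtain ⟨φ, σ, hinj, hpath, -, hdisj⟩ := h
  have hnil {x y : V} (h : H.Adj x y) : ¬(σ h).Nil := not_nil_of_ne (hinj.ne h.ne)
  have hsnd {x y : V} (h : H.Adj x y) :
      (σ h).snd = φ y ∨ (σ h).snd ∈ (σ h).internalSupport := by
    rw [(hpath h).mem_internalSupport_iff, or_iff_not_imp_left]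
    exact fun hy => ⟨(σ h).getVert_mem_support 1, ((σ h).adj_snd (hnil h)).ne', hy⟩
  refine ⟨φ, fun x => Nat.card_le_card_of_injective
    (fun y => ⟨(σ y.2).snd, (σ y.2).adj_snd (hnil y.2)⟩) ?_⟩
  rintro ⟨y, hy⟩ ⟨z, hz⟩ hyz
  replace hyz : (σ hy).snd = (σ hz).snd := congrArg Subtype.val hyz
  rw [Subtype.mk.injEq]
  by_contra hne
  have hedge : s(x, y) ≠ s(x, z) := by simp [hne, (show H.Adj x z from hz).ne]
  rcases hsnd hy with hy' | hy'
  · rcases hsnd hz with hz' | hz'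
    · exact hne (hinj (hy'.symm.trans (hyz.trans hz')))
    · exact hdisj hz hy hedge.symm _ hz' (by rw [← hyz]; exact getVert_mem_support _ 1)
  · exact hdisj hy hz hedge _ hy' (by rw [hyz]; exact getVert_mem_support _ 1)

lemma isTopMinor_of_subdivided_edge [DecidableEq V] {φ : V → W} (hφ : Function.Injective φ)
    {a b : V} (hadj : ∀ ⦃x y⦄, H.Adj x y → s(x, y) ≠ s(a, b) → G.Adj (φ x) (φ y))
    {p : G.Walk (φ a) (φ b)} (hp : p.IsPath)
    (hint : ∀ z ∈ p.internalSupport, z ∉ Set.range φ) : H.IsTopMinor G := by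
  have hne {x y : V} (h1 : ¬(x = a ∧ y = b)) (h2 : ¬(x = b ∧ y = a)) : s(x, y) ≠ s(a, b) := by
    rw [Ne, Sym2.eq_iff]
    tauto
  let σ : ∀ ⦃x y⦄, H.Adj x y → G.Walk (φ x) (φ y) := fun x y h =>
    if h1 : x = a ∧ y = b then p.copy (by rw [h1.1]) (by rw [h1.2])
    else if h2 : x = b ∧ y = a then p.reverse.copy (by rw [h2.1]) (by rw [h2.2])
    else (hadj h (hne h1 h2)).toWalk
  have hσ_toWalk {x y : V} (h : H.Adj x y) (hxy : s(x, y) ≠ s(a, b)) :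
      σ h = (hadj h hxy).toWalk := by
    rw [Ne, Sym2.eq_iff, not_or] at hxy
    simp only [σ, dif_neg hxy.1, dif_neg hxy.2]
  have hσ_internal {x y : V} (h : H.Adj x y) :
      ∀ z ∈ (σ h).internalSupport, z ∈ p.internalSupport := by
    intro z hz
    simp only [σ] at hz
    split_ifs at hz with h1 h2
    · obtain ⟨rfl, rfl⟩ := h1
      simpa using hz
    · obtain ⟨rfl, rfl⟩ := h2
      simp only [copy_rfl_rfl, hp.reverse.mem_internalSupport_iff, support_reverse,
        List.mem_reverse] at hz
      exact hp.mem_internalSupport_iff.mpr ⟨hz.1, hz.2.2, hz.2.1⟩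
    · simp at hz
  refine ⟨φ, σ, hφ, fun x y h => ?_, fun x y h => ?_, fun x y x' y' h h' hxy z hz => ?_⟩
  · simp only [σ]
    split_ifs
    · simpa using hp
    · simpa using hp.reverse
    · exact IsPath.of_adj _
  · by_cases h1 : x = a ∧ y = b
    · obtain ⟨rfl, rfl⟩ := h1
      simp [σ, h.ne]
    by_cases h2 : x = b ∧ y = a
    · obtain ⟨rfl, rfl⟩ := h2
      simp [σ, h.ne]
    rw [hσ_toWalk h (hne h1 h2), hσ_toWalk h.symm (by rw [Sym2.eq_swap]; exact hne h1 h2)]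
    rfl
  · by_cases hab : s(x, y) = s(a, b)
    · have hz' := hint z (hσ_internal h z hz)
      rw [hσ_toWalk h' (hab ▸ hxy.symm), Adj.support_toWalk]
      simp only [List.mem_cons, List.not_mem_nil, or_false]
      rintro (rfl | rfl) <;> exact hz' ⟨_, rfl⟩
    · simp [hσ_toWalk h hab] at hz

lemma exists_isCycle_four_le_length_of_cycleGraph_four_isTopMinor
    (h : (cycleGraph 4).IsTopMinor G) : ∃ (u : W) (c : G.Walk u u), c.IsCycle ∧ 4 ≤ c.length := by
  obtain ⟨φ, σ, hinj, hpath, -, hdisj⟩ := h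
  have h01 : (cycleGraph 4).Adj 0 1 := by decide
  have h12 : (cycleGraph 4).Adj 1 2 := by decide
  have h23 : (cycleGraph 4).Adj 2 3 := by decide
  have h30 : (cycleGraph 4).Adj 3 0 := by decide
  have hlen {x y : Fin 4} (h : (cycleGraph 4).Adj x y) : 1 ≤ (σ h).length :=
    not_nil_iff_lt_length.mp (not_nil_of_ne (hinj.ne h.ne))
  have hdisj_tail {x y x' y' : Fin 4} (h : (cycleGraph 4).Adj x y)
      (h' : (cycleGraph 4).Adj x' y') (hyy' : y ≠ y') (hne : s(x, y) ≠ s(x', y')) :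
      (σ h).support.tail.Disjoint (σ h').support.tail :=
    (hpath h).disjoint_tail_support (hpath h') (hdisj h h' hne) (hdisj h' h hne.symm)
      (hinj.ne hyy')
  set c := (σ h01).append ((σ h12).append ((σ h23).append (σ h30)))
  have hc : 4 ≤ c.length := by
    simp only [c, length_append]
    linarith [hlen h01, hlen h12, hlen h23, hlen h30]
  refine ⟨φ 0, c, isCycle_of_nodup_tail_support ?_ (by omega), hc⟩
  simp only [c, tail_support_append, List.nodup_append', List.disjoint_append_right]
  refine ⟨(hpath _).support_nodup.tail, ⟨(hpath _).support_nodup.tail,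
    ⟨(hpath _).support_nodup.tail, (hpath _).support_nodup.tail, ?_⟩, ?_, ?_⟩, ?_, ?_, ?_⟩ <;>
  exact hdisj_tail _ _ (by decide) (by decide)

end SimpleGraph

instance : DecidableRel bannerGraph.Adj := fun a b =>
  decidable_of_iff' _ (SimpleGraph.fromRel_adj _ a b)

lemma bannerGraph_card_neighborSet_zero : Nat.card (bannerGraph.neighborSet 0) = 3 := by
  rw [Nat.card_eq_fintype_card]
  decide

lemma cycleGraph_four_isContained_bannerGraph : SimpleGraph.cycleGraph 4 ⊑ bannerGraph :=
  ⟨⟨⟨Fin.castSucc, fun {a b} => by revert a b; decide⟩, Fin.castSucc_injective 4⟩⟩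

namespace SimpleGraph

open Walk

variable {W : Type*} {G : SimpleGraph W}

lemma not_bannerGraph_isTopMinor_of_card_neighborSet_eq_two [Finite W]
    (hG : ∀ v, Nat.card (G.neighborSet v) = 2) : ¬bannerGraph.IsTopMinor G := fun h => by
  obtain ⟨φ, hφ⟩ := h.exists_card_neighborSet_le
  have := hφ 0
  rw [bannerGraph_card_neighborSet_zero, hG] at this
  omega

lemma bannerGraph_isTopMinor_of_isCycle_of_adj {u w : W} {c : G.Walk u u} (hc : c.IsCycle)
    (hlen : 4 ≤ c.length) (huw : G.Adj u w) (hw : w ∉ c.support) :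
    bannerGraph.IsTopMinor G := by
  rcases c with _ | ⟨h1, _ | ⟨h2, _ | ⟨h3, d⟩⟩⟩
  all_goals simp only [length_nil, length_cons] at hlen; try omega
  rename_i b1 b2 b3
  -- The banner's `4`-cycle is `u b1 b2 b3` with its edge `b3 u` subdivided by `d`.
  simp only [cons_isCycle_iff, cons_isPath_iff, support_cons, List.mem_cons, not_or] at hc hw
  obtain ⟨⟨⟨hd, hb2⟩, hb12, hb1⟩, -⟩ := hc
  obtain ⟨hwu, hwb1, hwb2, hwd⟩ := hw
  have hb3u : b3 ≠ u := by
    rintro rfl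
    have := length_eq_zero_iff.mpr (isPath_iff_nil.mp hd)
    omega
  have hint : ∀ z ∈ d.internalSupport, z ∉ Set.range ![u, b1, b2, b3, w] := by
    intro z hz
    rw [hd.mem_internalSupport_iff] at hz
    obtain ⟨hz, hzb3, hzu⟩ := hz
    rintro ⟨i, rfl⟩
    fin_cases i <;> simp_all
  refine isTopMinor_of_subdivided_edge (φ := ![u, b1, b2, b3, w]) (a := 3) (b := 0) ?_ ?_ hd hint
  · have hb2u : b2 ≠ u := fun h => hb2 (h ▸ d.end_mem_support)
    have hb1b3 : b1 ≠ b3 := fun h => hb1 (h ▸ d.start_mem_support)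
    have hwb3 : w ≠ b3 := fun h => hwd (h ▸ d.start_mem_support)
    intro i j hij
    fin_cases i <;> fin_cases j <;> simp_all [h1.ne, h3.ne, eq_comm]
  · intro x y hxy hne
    fin_cases x <;> fin_cases y <;> simp_all [bannerGraph, adj_comm]

lemma bannerGraph_isTopMinor_of_isCycle_append {v w : W} {t : G.Walk v w} {d : G.Walk w v}
    (hc : (t.append d).IsCycle) (hvw : G.Adj v w) (hchord : s(v, w) ∉ (t.append d).edges)
    (hd : 3 ≤ d.length) : bannerGraph.IsTopMinor G := by
  have ht : ¬t.Nil := not_nil_of_ne hvw.ne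
  rw [edges_append, List.mem_append, not_or] at hchord
  have hc' : (cons hvw d).IsCycle :=
    (cons_isCycle_iff d hvw).mpr ⟨hc.isPath_of_append_right ht, hchord.2⟩
  refine bannerGraph_isTopMinor_of_isCycle_of_adj hc' (by simp; omega) (t.adj_snd ht) ?_
  have htail := hc.support_nodup
  rw [tail_support_append, List.nodup_append'] at htail
  have hsnd_ne : t.snd ≠ w := by
    intro h
    have := t.mk_start_snd_mem_edges ht
    rw [h] at this
    exact hchord.1 this
  rw [support_cons, List.mem_cons, not_or, ← d.cons_tail_support, List.mem_cons, not_or]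
  exact ⟨(t.adj_snd ht).ne', hsnd_ne, htail.2.2 (t.snd_mem_tail_support ht)⟩

lemma bannerGraph_isTopMinor_of_isCycle_of_adj_of_notMem_edges [DecidableEq W] {v w : W}
    {c : G.Walk v v} (hc : c.IsCycle) (hlen : 5 ≤ c.length) (hw : w ∈ c.support)
    (hvw : G.Adj v w) (hchord : s(v, w) ∉ c.edges) : bannerGraph.IsTopMinor G := by
  have hspec := c.take_spec hw
  have hsum := congrArg length hspec
  rw [length_append] at hsum
  rcases le_or_gt 3 (c.dropUntil w hw).length with hd | hd
  · rw [← hspec] at hc hchord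
    exact bannerGraph_isTopMinor_of_isCycle_append hc hvw hchord hd
  · rw [← hspec, ← isCycle_reverse, reverse_append] at hc
    rw [← hspec, ← List.mem_reverse, ← edges_reverse, reverse_append] at hchord
    exact bannerGraph_isTopMinor_of_isCycle_append hc hvw hchord (by simp; omega)

lemma bannerGraph_isTopMinor_of_isCycle [Fintype W] (hconn : G.Connected)
    (hcard : 5 ≤ Fintype.card W) (hG : ¬G.IsCycleGraph) {u : W} {c : G.Walk u u}
    (hc : c.IsCycle) (hlen : 4 ≤ c.length) : bannerGraph.IsTopMinor G := by
  classical
  by_cases hspan : ∀ x, x ∈ c.support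
  · obtain ⟨v, hv⟩ : ∃ v, Nat.card (G.neighborSet v) ≠ 2 := by
      by_contra! h
      exact hG ⟨hconn, h⟩
    obtain ⟨w, hvw, hchord⟩ := hc.exists_adj_notMem_edges (hspan v) hv
    have hham := (hc.isHamiltonianCycle_of_forall_mem_support hspan).rotate (hspan v)
    refine bannerGraph_isTopMinor_of_isCycle_of_adj_of_notMem_edges hham.isCycle
      (hham.length_eq ▸ hcard) (hham.mem_support w) hvw ?_
    rwa [(rotate_edges c v (hspan v)).perm.mem_iff]
  · obtain ⟨y, hy⟩ := not_forall.mp hspan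
    obtain ⟨p⟩ := hconn.preconnected u y
    obtain ⟨d, -, hd, hdy⟩ := p.exists_boundary_dart {x | x ∈ c.support} c.start_mem_support hy
    exact bannerGraph_isTopMinor_of_isCycle_of_adj (hc.rotate hd) (by simpa using hlen) d.adj
      (by simpa using hdy)

end SimpleGraph

/-- A connected finite simple graph on at least five vertices has no banner topological
minor iff it is a cycle or has no `C₄` topological minor. -/
theorem statement_17 {V : Type} [Fintype V] (G : SimpleGraph V)
    (hconn : G.Connected) (hcard : 5 ≤ Fintype.card V) :
    ¬ bannerGraph.IsTopMinor G ↔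
      G.IsCycleGraph ∨ ¬ (SimpleGraph.cycleGraph 4).IsTopMinor G := by
  constructor
  · refine fun hb => or_iff_not_imp_left.mpr fun hG hc4 => hb ?_
    obtain ⟨u, c, hc, hlen⟩ := exists_isCycle_four_le_length_of_cycleGraph_four_isTopMinor hc4
    exact bannerGraph_isTopMinor_of_isCycle hconn hcard hG hc hlen
  · rintro (hG | hc4) hb
    · exact not_bannerGraph_isTopMinor_of_card_neighborSet_eq_two hG.2 hb
    · exact hc4 (hb.of_isContained cycleGraph_four_isContained_bannerGraph)
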